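/- Consider a Stable Marriage instance with men U, women W, |U| ≤ |W|, and an agent w* ∈ W (assume complete preference lists and a deletion budget ℓ). Construct f(I, w*) by adding a new man m* whose first choice is w* (rest arbitrary) and who is ranked last by all women. Then for any set D of at most ℓ deleted agents (with w* ∉ D, m* ∉ D), w* is unassigned in some (equivalently, every) stable matching of I − D if and only if the pair {m*, w*} is contained in a stable matching of f(I, w*) − D. Consequently M is a stable matching of I − D leaving w* unassigned iff M ∪ {{m*, w*}} is stable in f(I, w*) − D. -/

import Mathlib

/-- A Stable Marriage instance with men `U` and women `W`, given by complete strict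
preference lists encoded as injective rank functions (smaller rank = more preferred). -/
structure SMI (U W : Type*) where
  mrk : U → W → ℕ
  wrk : W → U → ℕ
  minj : ∀ u, Function.Injective (mrk u)
  winj : ∀ w, Function.Injective (wrk w)

/-- `M` is a (partial) matching: relation matching each agent to at most one partner. -/
def IsMatching {U W : Type*} (M : U → W → Prop) : Prop :=
  (∀ u w w', M u w → M u w' → w = w') ∧ ∀ u u' w, M u w → M u' w → u = u'

/-- Pair `{u,w}` blocks `M`: they are not matched to each other, `u` is unassigned or
prefers `w` to its partner, and `w` is unassigned or prefers `u` to its partner. -/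
def BlocksD {U W : Type*} (I : SMI U W) (M : U → W → Prop) (u : U) (w : W) : Prop :=
  ¬ M u w ∧ (∀ w', M u w' → I.mrk u w < I.mrk u w') ∧
    ∀ u', M u' w → I.wrk w u < I.wrk w u'

/-- `M` is a stable matching of the instance restricted to the remaining (non-deleted)
agents `A ⊆ U`, `B ⊆ W`: it is a matching among agents of `A` and `B` and no pair of
remaining agents blocks it. -/
def StableOn {U W : Type*} (I : SMI U W) (A : Set U) (B : Set W)
    (M : U → W → Prop) : Prop :=
  IsMatching M ∧ (∀ u w, M u w → u ∈ A ∧ w ∈ B) ∧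
    ∀ u ∈ A, ∀ w ∈ B, ¬ BlocksD I M u w

/-- The restriction of a matching to remaining agents. -/
def restrictM {U W : Type*} (M : U → W → Prop) (A : Set U) (B : Set W) :
    U → W → Prop :=
  fun u w => M u w ∧ u ∈ A ∧ w ∈ B

/-!
The new man `m*` (encoded as `none`) ranks `w*` first, so he never blocks a matching that
pairs him with `w*`. Every woman ranks him last, so a pair of original agents blocks a matching of `f(I, w*) − D`
exactly when it blocks the restriction of that matching to `I − D`. Hence removing `{m*, w*}`
from a stable matching of `f(I, w*) − D`, or adding it to a stable matching of `I − D` that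
leaves `w*` free, preserves stability.
-/

section StarExtension

variable {U W : Type*}

theorem IsMatching.comp_some {N : Option U → W → Prop} (hN : IsMatching N) :
    IsMatching (N ∘ some) :=
  ⟨fun u => hN.1 (some u), fun _ _ w hu hu' => Option.some.inj (hN.2 _ _ w hu hu')⟩

theorem IsMatching.not_comp_some_of_none {N : Option U → W → Prop} (hN : IsMatching N)
    {wstar : W} (hstar : N none wstar) (u : U) : ¬ N (some u) wstar :=
  fun hu => Option.some_ne_none u (hN.2 _ _ wstar hu hstar)

theorem IsMatching.of_comp_some {N : Option U → W → Prop} (hN : IsMatching (N ∘ some))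
    {wstar : W} (hfree : ∀ u, ¬ N (some u) wstar) (hnone : N none = (· = wstar)) :
    IsMatching N := by
  refine ⟨?_, ?_⟩
  · rintro (_ | u) w w' hw hw'
    · rw [hnone] at hw hw'
      exact hw.trans hw'.symm
    · exact hN.1 u w w' hw hw'
  · rintro (_ | u) (_ | u') w hw hw'
    · rfl
    · rw [hnone] at hw
      exact absurd (hw ▸ hw') (hfree u')
    · rw [hnone] at hw'
      exact absurd (hw' ▸ hw) (hfree u)
    · exact congrArg some (hN.2 u u' w hw hw')

variable {I : SMI U W} {I' : SMI (Option U) W}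

theorem BlocksD.comp_some (hextm : ∀ u w, I'.mrk (some u) w = I.mrk u w)
    (hextw : ∀ w u, I'.wrk w (some u) = I.wrk w u) {N : Option U → W → Prop} {u : U} {w : W}
    (h : BlocksD I' N (some u) w) : BlocksD I (N ∘ some) u w := by
  obtain ⟨hnot, hman, hwoman⟩ := h
  refine ⟨hnot, fun w' hw' => ?_, fun u' hu' => ?_⟩
  · simpa only [hextm] using hman w' hw'
  · simpa only [hextw] using hwoman (some u') hu'

theorem BlocksD.of_comp_some (hextm : ∀ u w, I'.mrk (some u) w = I.mrk u w)
    (hextw : ∀ w u, I'.wrk w (some u) = I.wrk w u)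
    (hlast : ∀ w u, I'.wrk w (some u) < I'.wrk w none) {N : Option U → W → Prop} {u : U}
    {w : W} (h : BlocksD I (N ∘ some) u w) : BlocksD I' N (some u) w := by
  obtain ⟨hnot, hman, hwoman⟩ := h
  refine ⟨hnot, fun w' hw' => ?_, ?_⟩
  · simpa only [hextm] using hman w' hw'
  · rintro (_ | u') hu'
    · exact hlast w u
    · simpa only [hextw] using hwoman u' hu'

theorem not_blocksD_none_of_top {wstar : W}
    (htop : ∀ w', w' ≠ wstar → I'.mrk none wstar < I'.mrk none w')
    {N : Option U → W → Prop} (hnone : N none = (· = wstar)) (w : W) :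
    ¬ BlocksD I' N none w := by
  rintro ⟨hnot, hman, -⟩
  rw [hnone] at hnot hman
  exact (htop w hnot).not_gt (hman wstar rfl)

theorem StableOn.of_comp_some (hextm : ∀ u w, I'.mrk (some u) w = I.mrk u w)
    (hextw : ∀ w u, I'.wrk w (some u) = I.wrk w u) {wstar : W}
    (htop : ∀ w', w' ≠ wstar → I'.mrk none wstar < I'.mrk none w')
    {A : Set U} {B : Set W} {N : Option U → W → Prop} (hN : StableOn I A B (N ∘ some))
    (hfree : ∀ u, ¬ N (some u) wstar) (hnone : N none = (· = wstar)) (hws : wstar ∈ B) :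
    StableOn I' {x | ∀ u, x = some u → u ∈ A} B N := by
  obtain ⟨hmatch, hmem, hstab⟩ := hN
  refine ⟨hmatch.of_comp_some hfree hnone, ?_, ?_⟩
  · rintro (_ | u) w hw
    · rw [hnone] at hw
      exact ⟨fun u h => (Option.some_ne_none u h.symm).elim, hw ▸ hws⟩
    · exact ⟨fun u' h => Option.some.inj h ▸ (hmem u w hw).1, (hmem u w hw).2⟩
  · rintro (_ | u) hu w hw hblock
    · exact not_blocksD_none_of_top htop hnone w hblock
    · exact hstab u (hu u rfl) w hw (hblock.comp_some hextm hextw)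

theorem StableOn.comp_some (hextm : ∀ u w, I'.mrk (some u) w = I.mrk u w)
    (hextw : ∀ w u, I'.wrk w (some u) = I.wrk w u)
    (hlast : ∀ w u, I'.wrk w (some u) < I'.wrk w none) {A : Set U} {B : Set W}
    {N : Option U → W → Prop} (hN : StableOn I' {x | ∀ u, x = some u → u ∈ A} B N) :
    StableOn I A B (N ∘ some) := by
  obtain ⟨hmatch, hmem, hstab⟩ := hN
  refine ⟨hmatch.comp_some, fun u w hw => ⟨(hmem _ w hw).1 u rfl, (hmem _ w hw).2⟩, ?_⟩
  intro u hu w hw hblock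
  exact hstab (some u) (fun u' h => Option.some.inj h ▸ hu) w hw
    (hblock.of_comp_some hextm hextw hlast)

end StarExtension

theorem stmt11 {U W : Type*}
    (I : SMI U W) (I' : SMI (Option U) W) (wstar : W)
    (DU : Finset U) (DW : Finset W)
    (hws : wstar ∉ DW)
    (hextm : ∀ u w, I'.mrk (some u) w = I.mrk u w)
    (hextw : ∀ w u, I'.wrk w (some u) = I.wrk w u)
    (htop : ∀ w', w' ≠ wstar → I'.mrk none wstar < I'.mrk none w')
    (hlast : ∀ w u, I'.wrk w (some u) < I'.wrk w none) :
    ((∃ M : U → W → Prop,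
        StableOn I {u | u ∉ DU} {w | w ∉ DW} M ∧ ∀ u, ¬ M u wstar) ↔
      (∃ N : Option U → W → Prop,
        StableOn I' {x | ∀ u, x = some u → u ∉ DU} {w | w ∉ DW} N ∧ N none wstar)) ∧
    (∀ M : U → W → Prop,
      (StableOn I {u | u ∉ DU} {w | w ∉ DW} M ∧ ∀ u, ¬ M u wstar) ↔
      StableOn I' {x | ∀ u, x = some u → u ∉ DU} {w | w ∉ DW}
        (fun x w => match x with
          | some u => M u w
          | none => w = wstar)) := by
  refine ⟨⟨?_, ?_⟩, fun M => ⟨?_, ?_⟩⟩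
  · rintro ⟨M, hM, hfree⟩
    exact ⟨fun x w => x.elim (w = wstar) (M · w),
      hM.of_comp_some hextm hextw htop hfree rfl hws, rfl⟩
  · rintro ⟨N, hN, hstar⟩
    exact ⟨N ∘ some, hN.comp_some hextm hextw hlast, hN.1.not_comp_some_of_none hstar⟩
  · rintro ⟨hM, hfree⟩
    exact hM.of_comp_some hextm hextw htop hfree rfl hws
  · intro hN
    exact ⟨hN.comp_some hextm hextw hlast, hN.1.not_comp_some_of_none rfl⟩
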